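/- arXiv:2011.02407 — 2 statements merged into one kernel-verified Lean document; each statement's English description precedes it below -/
import Mathlib

section
/- Let Y and S be random variables on a finite probability space with Pr(Y=y, S=s) > 0 for all values y, s. If each sample point with values (y,s) is reweighted by w(y,s) = Pr(Y=y)·Pr(S=s)/Pr(Y=y, S=s), then under the reweighted measure, Y and S are independent, and the marginal distributions of Y and S are unchanged. -/
open Finset

/-- Reweighing for demographic parity: given a finite joint distribution `p` on
`(Y, S)` with all masses positive, reweighting each point `(y,s)` by
`w(y,s) = Pr(Y=y)·Pr(S=s)/Pr(Y=y,S=s)` yields a probability measure under which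
`Y` and `S` are independent and the marginals of `Y` and `S` are unchanged. -/
theorem reweighing_independence_and_marginals
    {𝒴 𝒮 : Type*} [Fintype 𝒴] [Fintype 𝒮]
    (p : 𝒴 → 𝒮 → ℝ) (hpos : ∀ y s, 0 < p y s)
    (hsum : ∑ y, ∑ s, p y s = 1)
    (pY : 𝒴 → ℝ) (hpY : ∀ y, pY y = ∑ s, p y s)
    (pS : 𝒮 → ℝ) (hpS : ∀ s, pS s = ∑ y, p y s)
    (w : 𝒴 → 𝒮 → ℝ) (hw : ∀ y s, w y s = pY y * pS s / p y s)
    (p' : 𝒴 → 𝒮 → ℝ) (hp' : ∀ y s, p' y s = p y s * w y s) :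
    (∑ y, ∑ s, p' y s = 1) ∧
    (∀ y s, p' y s = (∑ s', p' y s') * (∑ y', p' y' s)) ∧
    (∀ y, ∑ s, p' y s = pY y) ∧
    (∀ s, ∑ y, p' y s = pS s) := by
  have key : ∀ y s, p' y s = pY y * pS s := by
    intro y s
    rw [hp', hw]
    field_simp [(hpos y s).ne']
  have hSsum : ∑ s, pS s = 1 := by
    simp only [hpS]; rw [Finset.sum_comm]; exact hsum
  have hYsum : ∑ y, pY y = 1 := by simp only [hpY]; exact hsum
  have hmY : ∀ y, ∑ s, p' y s = pY y := by
    intro y; simp only [key, ← Finset.mul_sum, hSsum, mul_one]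
  have hmS : ∀ s, ∑ y, p' y s = pS s := by
    intro s; simp only [key, ← Finset.sum_mul, hYsum, one_mul]
  refine ⟨?_, ?_, hmY, hmS⟩
  · simp only [hmY]; exact hYsum
  · intro y s; rw [hmY, hmS, key]
end

section
/- If binary random variables Ŷ, Y, S (with all eight joint probabilities positive) satisfy both equality of opportunity and predictive equality via a single reweighing scheme — i.e., there exists a weight function w(y) depending only on ŷ such that w equals both w_EOp(y,s) = Pr(Ŷ=y)/Pr(Ŷ=y|S=s,Y=1) and w_PE(y,s) = Pr(Ŷ=y)/Pr(Ŷ=y|S=s,Y=0) for all y,s — then Pr(Ŷ=y|S=s,Y=1) = Pr(Ŷ=y|S=s,Y=0) · (Pr(Ŷ=y|S=s',Y=1)/Pr(Ŷ=y|S=s',Y=0)) for all y, s, s'; in particular, the two reweighing schemes coincide only when the conditional distributions satisfy this compatibility condition, and in general w_EOp ≠ w_PE. -/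
open Finset

/-!
A single weight `w ŷ = Pr(Ŷ=ŷ) / c ŷ s` pins down `c ŷ s = Pr(Ŷ=ŷ) / w ŷ`, since `Pr(Ŷ=ŷ) ≠ 0`.
So both conditional distributions equal `Pr(Ŷ=ŷ) / w ŷ` for every `s`, and the compatibility
identity reduces to `x = x * (x / x)`, which holds in any group with zero, even at `x = 0`.
-/

theorem eq_div_of_eq_div_left {G₀ : Type*} [CommGroupWithZero G₀] {a c w : G₀}
    (ha : a ≠ 0) (hw : w = a / c) : c = a / w := by
  rw [hw, div_div_cancel₀ ha]

theorem self_eq_mul_div_self {G₀ : Type*} [GroupWithZero G₀] (x : G₀) : x = x * (x / x) := by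
  rw [← mul_div_assoc, mul_self_div_self]

theorem single_reweighing_for_equalized_odds_compatibility_general
    (p : Bool → Bool → Bool → ℝ) (hpos : ∀ yh y s, 0 < p yh y s)
    (PYh : Bool → ℝ) (hPYh : ∀ yh, PYh yh = ∑ y, ∑ s, p yh y s)
    -- c1 yh s = Pr(Ŷ=yh | S=s, Y=1),  c0 yh s = Pr(Ŷ=yh | S=s, Y=0)
    (c1 c0 : Bool → Bool → ℝ)
    (w : Bool → ℝ)
    (hwEOp : ∀ yh s, w yh = PYh yh / c1 yh s)
    (hwPE : ∀ yh s, w yh = PYh yh / c0 yh s) :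
    ∀ yh s s', c1 yh s = c0 yh s * (c1 yh s' / c0 yh s') := by
  intro yh s s'
  have hPYh_ne : PYh yh ≠ 0 := by
    rw [hPYh]
    exact (sum_pos (fun y _ => sum_pos (fun s _ => hpos yh y s) univ_nonempty)
      univ_nonempty).ne'
  have hc1_eq (t : Bool) : c1 yh t = PYh yh / w yh := eq_div_of_eq_div_left hPYh_ne (hwEOp yh t)
  have hc0_eq (t : Bool) : c0 yh t = PYh yh / w yh := eq_div_of_eq_div_left hPYh_ne (hwPE yh t)
  rw [hc1_eq, hc1_eq, hc0_eq, hc0_eq]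
  exact self_eq_mul_div_self _

/-- Obstruction to a single reweighing scheme for equalized odds.
`p yh y s` is the joint mass of `(Ŷ = yh, Y = y, S = s)` for binary variables
with all eight joint probabilities positive.  If a single weight function
`w(ŷ)` equals both the equality-of-opportunity weights
`Pr(Ŷ=ŷ)/Pr(Ŷ=ŷ|S=s,Y=1)` and the predictive-equality weights
`Pr(Ŷ=ŷ)/Pr(Ŷ=ŷ|S=s,Y=0)` for all `ŷ, s`, then
`Pr(Ŷ=ŷ|S=s,Y=1) = Pr(Ŷ=ŷ|S=s,Y=0) · (Pr(Ŷ=ŷ|S=s',Y=1)/Pr(Ŷ=ŷ|S=s',Y=0))`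
for all `ŷ, s, s'`. -/
theorem single_reweighing_for_equalized_odds_compatibility
    (p : Bool → Bool → Bool → ℝ) (hpos : ∀ yh y s, 0 < p yh y s)
    (hsum : ∑ yh, ∑ y, ∑ s, p yh y s = 1)
    (PYh : Bool → ℝ) (hPYh : ∀ yh, PYh yh = ∑ y, ∑ s, p yh y s)
    -- c1 yh s = Pr(Ŷ=yh | S=s, Y=1),  c0 yh s = Pr(Ŷ=yh | S=s, Y=0)
    (c1 c0 : Bool → Bool → ℝ)
    (hc1 : ∀ yh s, c1 yh s = p yh true s / (∑ yh', p yh' true s))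
    (hc0 : ∀ yh s, c0 yh s = p yh false s / (∑ yh', p yh' false s))
    (w : Bool → ℝ)
    (hwEOp : ∀ yh s, w yh = PYh yh / c1 yh s)
    (hwPE : ∀ yh s, w yh = PYh yh / c0 yh s) :
    ∀ yh s s', c1 yh s = c0 yh s * (c1 yh s' / c0 yh s') :=
  single_reweighing_for_equalized_odds_compatibility_general p hpos PYh hPYh c1 c0 w hwEOp hwPE
end
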